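/- arXiv:1407.4999 — 6 statements merged into one kernel-verified Lean document; each statement's English description precedes it below -/
import Mathlib

section
/- For any square matrix X of size k×k over a commutative ring and any scalars u_1,…,u_k, the sum over i = 1,…,k of the determinant of the matrix obtained from X by multiplying, for each column j, the (i,j) entry by u_j, equals (u_1 + u_2 + ⋯ + u_k) times det X. -/
open Matrix Finset

theorem Matrix.det_updateRow_eq_sum_mul_adjugate {n R : Type*} [Fintype n] [DecidableEq n]
    [CommRing R] (A : Matrix n n R) (i : n) (v : n → R) :
    (A.updateRow i v).det = ∑ j, v j * adjugate A j i := by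
  rw [← cramer_transpose_apply, cramer_eq_adjugate_mulVec, ← adjugate_transpose]
  simp only [mulVec, dotProduct, transpose_apply, mul_comm]

theorem sum_det_updateRow_smul {R : Type*} [CommRing R] {k : ℕ}
    (X : Matrix (Fin k) (Fin k) R) (u : Fin k → R) :
    ∑ i : Fin k, (X.updateRow i (fun j => u j * X i j)).det
      = (∑ j : Fin k, u j) * X.det := by
  have adjugate_mul_diag (j : Fin k) : ∑ i, adjugate X j i * X i j = X.det := by
    simpa [mul_apply] using congr_fun (congr_fun (adjugate_mul X) j) j
  calc ∑ i, (X.updateRow i (fun j => u j * X i j)).det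
      = ∑ j, u j * ∑ i, adjugate X j i * X i j := by
        simp only [det_updateRow_eq_sum_mul_adjugate, mul_sum]
        rw [sum_comm]
        exact sum_congr rfl fun _ _ => sum_congr rfl fun _ _ => by ring
    _ = (∑ j, u j) * X.det := by simp only [adjugate_mul_diag, sum_mul]
end

section
/- Let a_1,…,a_n, b be pairwise distinct rational numbers. There exist indices 1 ≤ i_1 < ⋯ < i_d ≤ n with b = a_{i_1} + ⋯ + a_{i_d} if and only if the (d+1)×(n+1) matrix with columns (1, a_j, a_j^2, …, a_j^d)^T for j = 1,…,n together with the column (0,…,0,1,b)^T has d+1 linearly dependent columns. -/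
open Matrix Finset

/-- The columns of the `(d+1) × (n+1)` matrix: for `j < n` the Vandermonde-type
column `(1, a_j, a_j^2, …, a_j^d)`, and the extra column `(0, …, 0, 1, b)`
(with the `1` in coordinate `d-1` and `b` in coordinate `d`). -/
noncomputable def vardyColumn {n d : ℕ} (a : Fin n → ℚ) (b : ℚ) (j : Fin (n + 1)) :
    Fin (d + 1) → ℚ :=
  fun r =>
    if h : (j : ℕ) < n then a ⟨j, h⟩ ^ (r : ℕ)
    else if (r : ℕ) + 1 = d then 1 else if (r : ℕ) = d then b else 0

/-!
Fix `s` of size `d` and `P = ∏_{j ∈ s} (X - a_j)`. The Vandermonde columns `(a_j^r)_{r ≤ d}`,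
`j ∈ s`, span exactly the kernel of the functional `v ↦ ∑_r P.coeff r * v r` on `ℚ^{d+1}`:
they lie in it because `P (a_j) = 0`, and both spaces have dimension `d`.
Any `d + 1` Vandermonde columns are independent, so a dependent set of `d + 1` columns consists of
the extra column `w = e_{d-1} + b e_d` and `d` Vandermonde columns, and it is dependent exactly
when `w` lies in that kernel, i.e. when `P.coeff (d - 1) + b * P.coeff d = b - ∑_{j ∈ s} a_j`
vanishes.
-/

open Polynomial Module

section PowerVector

variable {R : Type*} [CommRing R]

def powerVector (m : ℕ) (x : R) : Fin m → R := fun r => x ^ (r : ℕ)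

def coeffDual (m : ℕ) (P : R[X]) : Dual R (Fin m → R) :=
  ∑ r : Fin m, P.coeff r • LinearMap.proj r

theorem coeffDual_apply (m : ℕ) (P : R[X]) (v : Fin m → R) :
    coeffDual m P v = ∑ r : Fin m, P.coeff r * v r := by
  simp [coeffDual]

theorem coeffDual_powerVector {m : ℕ} {P : R[X]} (hP : P.natDegree < m) (x : R) :
    coeffDual m P (powerVector m x) = P.eval x := by
  rw [coeffDual_apply, eval_eq_sum_range' hP]
  exact Fin.sum_univ_eq_sum_range (fun i => P.coeff i * x ^ i) m

theorem coeffDual_single (m : ℕ) (P : R[X]) (r : Fin m) (c : R) :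
    coeffDual m P (Pi.single r c) = P.coeff r * c := by
  simp [coeffDual_apply, Pi.single_apply]

theorem linearIndependent_powerVector [IsDomain R] {ι : Type*} [Fintype ι] {m : ℕ}
    {x : ι → R} (hx : Function.Injective x) (hm : Fintype.card ι ≤ m) :
    LinearIndependent R (fun i => powerVector m (x i)) := by
  let e := Fintype.equivFin ι
  rw [← linearIndependent_equiv e.symm, Fintype.linearIndependent_iff]
  intro g hg
  refine congrFun
    (eq_zero_of_forall_pow_sum_mul_pow_eq_zero (hx.comp e.symm.injective) fun r => ?_)
  simpa [powerVector] using congrFun hg ⟨r, r.2.trans_le hm⟩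

theorem linearIndepOn_powerVector [IsDomain R] {ι : Type*} {m : ℕ} {x : ι → R} {s : Finset ι}
    (hx : Set.InjOn x s) (hs : s.card ≤ m) :
    LinearIndepOn R (fun i => powerVector m (x i)) s :=
  linearIndependent_powerVector hx.injective (by simpa using hs)

end PowerVector

section Field

variable {K ι : Type*} [Field K] {x : ι → K} {s : Finset ι} {d : ℕ}

theorem span_powerVector_eq_ker_coeffDual (hx : Set.InjOn x s) (hs : s.card = d) :
    Submodule.span K ((fun i => powerVector (d + 1) (x i)) '' s) =
      LinearMap.ker (coeffDual (d + 1) (∏ i ∈ s, (X - C (x i)))) := by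
  set P := ∏ i ∈ s, (X - C (x i))
  have hdeg : P.natDegree = d := by simp [P, hs]
  apply Submodule.eq_of_le_of_finrank_eq
  · rw [Submodule.span_le]
    rintro _ ⟨i, hi, rfl⟩
    rw [SetLike.mem_coe, LinearMap.mem_ker, coeffDual_powerVector (by omega), eval_prod]
    exact Finset.prod_eq_zero hi (by simp)
  · have hne : coeffDual (d + 1) P ≠ 0 := fun h => by
      have := LinearMap.congr_fun h (Pi.single (Fin.last d) 1)
      rw [coeffDual_single, mul_one, Fin.val_last, ← hdeg,
        (monic_prod_X_sub_C x s).coeff_natDegree] at this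
      exact one_ne_zero this
    have hker := Dual.finrank_ker_add_one_of_ne_zero hne
    rw [finrank_fin_fun] at hker
    rw [Set.image_eq_range,
      finrank_span_eq_card (linearIndepOn_powerVector (m := d + 1) hx (by omega))]
    simp only [Finset.coe_sort_coe, Fintype.card_coe]
    omega

theorem coeffDual_prod_X_sub_C_single_add_single (hs : s.card = d + 1) (c : K) :
    coeffDual (d + 2) (∏ i ∈ s, (X - C (x i)))
        (Pi.single (Fin.last d).castSucc 1 + Pi.single (Fin.last (d + 1)) c) =
      c - ∑ i ∈ s, x i := by
  have hcoeff := prod_X_sub_C_coeff_card_pred s x (by omega)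
  have hlead := (monic_prod_X_sub_C x s).coeff_natDegree
  simp only [natDegree_finsetProd_X_sub_C_eq_card, hs, Nat.add_sub_cancel] at hcoeff hlead
  rw [map_add, coeffDual_single, coeffDual_single]
  simp [hcoeff, hlead]
  ring

end Field

theorem Fin.erase_last_eq_map_castSuccEmb {n : ℕ} (t : Finset (Fin (n + 1))) :
    t.erase (Fin.last n) =
      (t.preimage Fin.castSucc (Fin.castSucc_injective n).injOn).map Fin.castSuccEmb := by
  ext k
  cases k using Fin.lastCases <;> simp [Fin.castSucc_ne_last]

theorem Fin.last_notMem_map_castSuccEmb {n : ℕ} (s : Finset (Fin n)) :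
    Fin.last n ∉ s.map Fin.castSuccEmb := by
  simp [Fin.castSucc_ne_last]

section VardyColumn

variable {n d : ℕ} {a : Fin n → ℚ} (b : ℚ)

theorem vardyColumn_castSucc (i : Fin n) :
    vardyColumn (d := d) a b i.castSucc = powerVector (d + 1) (a i) := by
  funext r
  simp [vardyColumn, powerVector]

theorem vardyColumn_last :
    vardyColumn (d := d + 1) a b (Fin.last n) =
      Pi.single (Fin.last d).castSucc 1 + Pi.single (Fin.last (d + 1)) b := by
  funext r
  simp only [vardyColumn, Fin.val_last, lt_irrefl, dite_false, Pi.add_apply, Pi.single_apply,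
    Fin.ext_iff, Fin.val_castSucc]
  split_ifs <;> first | omega | simp

theorem linearIndepOn_vardyColumn_map_castSuccEmb (ha : Function.Injective a)
    {s : Finset (Fin n)} (hs : s.card ≤ d + 1) :
    LinearIndepOn ℚ (vardyColumn (d := d) a b) ↑(s.map Fin.castSuccEmb) := by
  rw [Finset.coe_map, Fin.coe_castSuccEmb]
  apply LinearIndepOn.image_of_comp
  rw [show vardyColumn a b ∘ Fin.castSucc = fun i => powerVector (d + 1) (a i) from
    funext (vardyColumn_castSucc b)]
  exact linearIndepOn_powerVector ha.injOn hs

theorem not_linearIndepOn_vardyColumn_insert_last_iff (ha : Function.Injective a)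
    {s : Finset (Fin n)} (hs : s.card = d + 1) :
    ¬ LinearIndepOn ℚ (vardyColumn (d := d + 1) a b)
        ↑(insert (Fin.last n) (s.map Fin.castSuccEmb)) ↔
      ∑ j ∈ s, a j = b := by
  rw [Finset.coe_insert, linearIndepOn_insert (mod_cast Fin.last_notMem_map_castSuccEmb s),
    not_and, not_not, imp_iff_right (linearIndepOn_vardyColumn_map_castSuccEmb b ha (by omega)),
    Finset.coe_map, Fin.coe_castSuccEmb, ← Set.image_comp,
    show vardyColumn a b ∘ Fin.castSucc = fun i => powerVector (d + 2) (a i) from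
      funext (vardyColumn_castSucc b),
    span_powerVector_eq_ker_coeffDual ha.injOn hs, LinearMap.mem_ker, vardyColumn_last,
    coeffDual_prod_X_sub_C_single_add_single hs, sub_eq_zero, eq_comm]

end VardyColumn

theorem subset_sum_iff_dependent_columns {n d : ℕ} (hd : 0 < d)
    (a : Fin n → ℚ) (ha : Function.Injective a) (b : ℚ) :
    (∃ s : Finset (Fin n), s.card = d ∧ ∑ j ∈ s, a j = b) ↔
      ∃ t : Finset (Fin (n + 1)), t.card = d + 1 ∧
        ¬ LinearIndependent ℚ (fun j : {x // x ∈ t} => vardyColumn (d := d) a b j.1) := by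
  obtain ⟨d, rfl⟩ : ∃ d', d = d' + 1 := ⟨d - 1, by omega⟩
  constructor
  · rintro ⟨s, hs, hsum⟩
    refine ⟨insert (Fin.last n) (s.map Fin.castSuccEmb), ?_,
      (not_linearIndepOn_vardyColumn_insert_last_iff b ha hs).2 hsum⟩
    rw [card_insert_of_notMem (Fin.last_notMem_map_castSuccEmb s), card_map, hs]
  · rintro ⟨t, ht, hdep⟩
    change ¬ LinearIndepOn ℚ (vardyColumn a b) ↑t at hdep
    have hts := Fin.erase_last_eq_map_castSuccEmb t
    set s := t.preimage Fin.castSucc (Fin.castSucc_injective n).injOn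
    by_cases hlast : Fin.last n ∈ t
    · have hs : s.card = d + 1 := by
        rw [← card_map Fin.castSuccEmb, ← hts, card_erase_of_mem hlast, ht, Nat.add_sub_cancel]
      rw [← insert_erase hlast, hts] at hdep
      exact ⟨s, hs, (not_linearIndepOn_vardyColumn_insert_last_iff b ha hs).1 hdep⟩
    · rw [erase_eq_of_notMem hlast] at hts
      refine absurd ?_ hdep
      rw [hts]
      exact linearIndepOn_vardyColumn_map_castSuccEmb b ha (by rw [← card_map, ← hts, ht])
end

section
/- A finite connected graph on at least 3 vertices has its edge set partitionable into two (nonempty) cuts if and only if it is bipartite. -/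
open SimpleGraph

/-- The set of edges of `G` having exactly one endpoint in `S`. -/
def cutEdges {V : Type*} (G : SimpleGraph V) (S : Set V) : Set (Sym2 V) :=
  {e | e ∈ G.edgeSet ∧ ∃ x y, e = s(x, y) ∧ x ∈ S ∧ y ∉ S}

/-!
Cuts add up under symmetric difference: `δ(S ∆ T) = δ(S) ∆ δ(T)`. Hence if `E = δ(S₁) ⊔ δ(S₂)`,
every edge crosses `S₁ ∆ S₂`, which is therefore one side of a bipartition. Conversely, if every
edge crosses `A` and `a ≠ b` both lie in `A` (two vertices of one colour exist as `|V| ≥ 3`),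
then `A` is independent, so `δ({a})` and `δ(A \ {a})` are disjoint with union `δ(A) = E`;
connectivity makes both cuts nonempty.
-/

namespace SimpleGraph

variable {V : Type*} {G : SimpleGraph V} {S T : Set V}

theorem mk_mem_cutEdges_iff {x y : V} :
    s(x, y) ∈ cutEdges G S ↔ G.Adj x y ∧ ¬(x ∈ S ↔ y ∈ S) := by
  constructor
  · rintro ⟨he, u, v, huv, hu, hv⟩
    refine ⟨he, ?_⟩
    rcases Sym2.eq_iff.mp huv with ⟨rfl, rfl⟩ | ⟨rfl, rfl⟩ <;> tauto
  · rintro ⟨hxy, hS⟩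
    by_cases hx : x ∈ S
    · exact ⟨hxy, x, y, rfl, hx, by tauto⟩
    · exact ⟨hxy, y, x, Sym2.eq_swap, by tauto, hx⟩

theorem cutEdges_symmDiff :
    cutEdges G (symmDiff S T) = symmDiff (cutEdges G S) (cutEdges G T) := by
  ext e
  induction e using Sym2.ind with
  | _ x y =>
    simp only [Set.mem_symmDiff, mk_mem_cutEdges_iff]
    tauto

theorem disjoint_cutEdges_of_forall_not_adj (hST : Disjoint S T)
    (hadj : ∀ x ∈ S, ∀ y ∈ T, ¬G.Adj x y) :
    Disjoint (cutEdges G S) (cutEdges G T) := by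
  rw [Set.disjoint_left]
  rintro e ⟨he, x, y, rfl, hxS, hyS⟩ heT
  have hxT : x ∉ T := Set.disjoint_left.mp hST hxS
  have hyT : y ∈ T := by
    have := (mk_mem_cutEdges_iff.mp heT).2
    tauto
  exact hadj x hxS y hyT he

theorem cutEdges_union_of_forall_not_adj (hST : Disjoint S T)
    (hadj : ∀ x ∈ S, ∀ y ∈ T, ¬G.Adj x y) :
    cutEdges G (S ∪ T) = cutEdges G S ∪ cutEdges G T := by
  have h := (disjoint_cutEdges_of_forall_not_adj (G := G) hST hadj).symmDiff_eq_sup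
  rwa [← cutEdges_symmDiff, hST.symmDiff_eq_sup] at h

theorem not_adj_of_cutEdges_eq_edgeSet (hS : cutEdges G S = G.edgeSet) {x y : V}
    (hx : x ∈ S) (hy : y ∈ S) : ¬G.Adj x y := fun hxy => by
  have : s(x, y) ∈ cutEdges G S := hS ▸ hxy
  exact (mk_mem_cutEdges_iff.mp this).2 (iff_of_true hx hy)

theorem Connected.cutEdges_nonempty (hG : G.Connected) (hS : S.Nonempty) (hS' : S ≠ Set.univ) :
    (cutEdges G S).Nonempty := by
  obtain ⟨x, hx⟩ := hS
  obtain ⟨y, hy⟩ := (Set.ne_univ_iff_exists_notMem S).mp hS'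
  obtain ⟨d, -, hd₁, hd₂⟩ := (hG.preconnected x y).some.exists_boundary_dart S hx hy
  exact ⟨d.edge, d.adj, d.fst, d.snd, rfl, hd₁, hd₂⟩

theorem colorable_two_of_cutEdges_eq_edgeSet (hS : cutEdges G S = G.edgeSet) :
    G.Colorable 2 := by
  classical
  refine (Coloring.mk (fun v => decide (v ∈ S)) fun {x y} hxy => ?_).colorable
  have : s(x, y) ∈ cutEdges G S := hS ▸ hxy
  simpa [decide_eq_decide] using (mk_mem_cutEdges_iff.mp this).2

theorem Coloring.cutEdges_colorClass (c : G.Coloring (Fin 2)) (i : Fin 2) :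
    cutEdges G (c.colorClass i) = G.edgeSet := by
  ext e
  induction e using Sym2.ind with
  | _ x y =>
    refine ⟨fun he => (mk_mem_cutEdges_iff.mp he).1, fun hxy => ?_⟩
    refine mk_mem_cutEdges_iff.mpr ⟨hxy, ?_⟩
    have hc : c x ≠ c y := c.valid hxy
    change ¬(c x = i ↔ c y = i)
    omega

end SimpleGraph

theorem edge_partition_into_two_cuts_iff_bipartite {V : Type*} [Fintype V]
    (G : SimpleGraph V) (hG : G.Connected) (hV : 3 ≤ Fintype.card V) :
    (∃ S₁ S₂ : Set V,
        S₁.Nonempty ∧ S₁ ≠ Set.univ ∧ S₂.Nonempty ∧ S₂ ≠ Set.univ ∧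
        (cutEdges G S₁).Nonempty ∧ (cutEdges G S₂).Nonempty ∧
        Disjoint (cutEdges G S₁) (cutEdges G S₂) ∧
        G.edgeSet = cutEdges G S₁ ∪ cutEdges G S₂) ↔
      G.Colorable 2 := by
  constructor
  · rintro ⟨S₁, S₂, -, -, -, -, -, -, hdisj, hE⟩
    refine colorable_two_of_cutEdges_eq_edgeSet (S := symmDiff S₁ S₂) ?_
    rw [cutEdges_symmDiff, hdisj.symmDiff_eq_sup, hE]
    rfl
  · rintro ⟨c⟩
    obtain ⟨a, b, hab, hcab⟩ :=
      Fintype.exists_ne_map_eq_of_card_lt c (by simp only [Fintype.card_fin]; omega)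
    set A := c.colorClass (c a)
    have hA := c.cutEdges_colorClass (c a)
    have haA : a ∈ A := rfl
    have hS₁ : ({a} : Set V) ≠ Set.univ :=
      (Set.ne_univ_iff_exists_notMem _).mpr ⟨b, hab.symm⟩
    have hS₂ : A \ {a} ≠ Set.univ :=
      (Set.ne_univ_iff_exists_notMem _).mpr ⟨a, fun h => h.2 rfl⟩
    have hS₂ne : (A \ {a}).Nonempty := ⟨b, hcab.symm, hab.symm⟩
    have hindep : ∀ x ∈ ({a} : Set V), ∀ y ∈ A \ {a}, ¬G.Adj x y := by
      rintro x rfl y hy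
      exact not_adj_of_cutEdges_eq_edgeSet hA haA hy.1
    have hdisj : Disjoint {a} (A \ {a}) := Set.disjoint_singleton_left.mpr fun h => h.2 rfl
    have hunion := cutEdges_union_of_forall_not_adj hdisj hindep
    rw [Set.union_sdiff_cancel (Set.singleton_subset_iff.mpr haA), hA] at hunion
    refine ⟨{a}, A \ {a}, Set.singleton_nonempty a, hS₁, hS₂ne, hS₂,
      hG.cutEdges_nonempty (Set.singleton_nonempty a) hS₁, hG.cutEdges_nonempty hS₂ne hS₂,
      disjoint_cutEdges_of_forall_not_adj hdisj hindep, hunion⟩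
end

section
/- In a matroid M, there exist a circuit and a cocircuit (cut) that are disjoint if and only if M is not uniform. Equivalently: every circuit of M contains a base if and only if M is a uniform matroid. -/
/-- A circuit of a matroid: a minimal dependent subset of the ground set. -/
def Matroid.IsCircuit' {α : Type*} (M : Matroid α) (C : Set α) : Prop :=
  C ⊆ M.E ∧ ¬ M.Indep C ∧ ∀ D ⊂ C, M.Indep D

/-- A cocircuit of a matroid: a circuit of the dual matroid. -/
def Matroid.IsCocircuit' {α : Type*} (M : Matroid α) (K : Set α) : Prop :=
  M✶.IsCircuit' K

/-- A matroid is uniform if its independent sets are exactly the subsets of the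
ground set of size at most `r`, for some `r`. -/
def Matroid.IsUniform {α : Type*} (M : Matroid α) : Prop :=
  ∃ r : ℕ, ∀ I ⊆ M.E, (M.Indep I ↔ I.ncard ≤ r)

/-!
A set is disjoint from some cocircuit exactly when it is not spanning: cocircuits are the minimal
sets with nonspanning complement, and a nonspanning set lies in the closure of `B \ {e}` for a
base `B` extending one of its bases, whose complement is a cocircuit. So a disjoint circuit and
cocircuit exist iff some circuit is nonspanning. In a finite matroid whose bases have `r`
elements, a spanning circuit has `r + 1` elements, since deleting any element leaves a base;
hence all circuits span iff the dependent sets are exactly those with more than `r` elements,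
which is uniformity.
-/

open Set

namespace Matroid

variable {α : Type*} {M : Matroid α} {B C I K X : Set α}

lemma isCircuit'_iff_isCircuit : M.IsCircuit' C ↔ M.IsCircuit C := by
  rw [isCircuit_iff_forall_ssubset, IsCircuit', Dep]
  tauto

lemma isCocircuit'_iff_isCocircuit : M.IsCocircuit' K ↔ M.IsCocircuit K :=
  isCircuit'_iff_isCircuit

lemma exists_isCocircuit_disjoint_iff_not_spanning (hX : X ⊆ M.E) :
    (∃ K, M.IsCocircuit K ∧ Disjoint X K) ↔ ¬ M.Spanning X := by
  constructor
  · rintro ⟨K, hK, hXK⟩ hXs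
    rw [isCocircuit_iff_minimal_compl_nonspanning] at hK
    exact hK.prop (hXs.superset (subset_sdiff.2 ⟨hX, hXK⟩))
  · intro hXs
    obtain ⟨I, hI⟩ := M.exists_isBasis X
    obtain ⟨B, hB, hIB⟩ := hI.indep.exists_isBase_superset
    obtain ⟨e, heB, heI⟩ : ∃ e ∈ B, e ∉ I := not_subset.1 fun hBI ↦
      hXs (hI.spanning_iff_spanning.1 ((hIB.antisymm hBI) ▸ hB.spanning))
    refine ⟨M.E \ M.closure (B \ {e}), hB.compl_closure_sdiff_singleton_isCocircuit heB, ?_⟩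
    refine disjoint_sdiff_right.mono_left (hI.subset_closure.trans (M.closure_subset_closure ?_))
    exact subset_sdiff_singleton hIB heI

lemma Indep.ncard_le_ncard_of_isBase [M.RankFinite] (hI : M.Indep I) (hB : M.IsBase B) :
    I.ncard ≤ B.ncard := by
  obtain ⟨B', hB', hIB'⟩ := hI.exists_isBase_superset
  exact (ncard_le_ncard hIB' hB'.finite).trans (hB'.ncard_eq_ncard_of_isBase hB).le

lemma IsCircuit.ncard_eq_of_spanning [M.RankFinite] (hC : M.IsCircuit C) (hCs : M.Spanning C)
    (hB : M.IsBase B) : C.ncard = B.ncard + 1 := by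
  obtain ⟨e, he⟩ := hC.nonempty
  have hCe : M.IsBase (C \ {e}) := (hC.sdiff_singleton_isBasis he).isBase_of_spanning hCs
  rw [← hCe.ncard_eq_ncard_of_isBase hB, ncard_sdiff_singleton_add_one he hC.finite]

lemma IsUniform.isCircuit_spanning [M.RankFinite] (hM : M.IsUniform) (hC : M.IsCircuit C) :
    M.Spanning C := by
  obtain ⟨r, hr⟩ := hM
  have hrC : r ≤ C.ncard := (not_le.1 (mt (hr C hC.subset_ground).2 hC.dep.not_indep)).le
  obtain ⟨I, hIC, hIr⟩ := exists_subset_card_eq hrC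
  have hI : M.Indep I := (hr I (hIC.trans hC.subset_ground)).2 hIr.le
  obtain ⟨B, hB, hIB⟩ := hI.exists_isBase_superset
  have hBr : B.ncard ≤ r := (hr B hB.subset_ground).1 hB.indep
  have hIeqB : I = B := eq_of_subset_of_ncard_le hIB (hIr ▸ hBr) hB.finite
  exact hB.spanning_of_superset (hIeqB ▸ hIC) hC.subset_ground

lemma isUniform_iff_forall_isCircuit_spanning [M.Finite] :
    M.IsUniform ↔ ∀ C, M.IsCircuit C → M.Spanning C := by
  refine ⟨fun hM C ↦ hM.isCircuit_spanning, fun hM ↦ ?_⟩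
  obtain ⟨B, hB⟩ := M.exists_isBase
  refine ⟨B.ncard, fun I hIE ↦ ⟨(·.ncard_le_ncard_of_isBase hB), fun hIr ↦ ?_⟩⟩
  by_contra hI
  obtain ⟨C, hCI, hC⟩ := (M.dep_iff_superset_isCircuit hIE).1 ⟨hI, hIE⟩
  have hCr : C.ncard ≤ B.ncard := (ncard_le_ncard hCI (M.set_finite I hIE)).trans hIr
  rw [hC.ncard_eq_of_spanning (hM C hC) hB] at hCr
  omega

end Matroid

open Matroid in
theorem disjoint_circuit_cocircuit_iff_not_uniform {α : Type*}
    (M : Matroid α) [M.Finite] :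
    (∃ C K : Set α, M.IsCircuit' C ∧ M.IsCocircuit' K ∧ Disjoint C K) ↔
      ¬ M.IsUniform := by
  simp only [isUniform_iff_forall_isCircuit_spanning, not_forall, exists_prop,
    isCircuit'_iff_isCircuit, isCocircuit'_iff_isCocircuit]
  have hdisj (C) (hC : M.IsCircuit C) :=
    exists_isCocircuit_disjoint_iff_not_spanning hC.subset_ground
  refine exists_congr fun C ↦ ⟨?_, ?_⟩
  · rintro ⟨K, hC, hK, hCK⟩
    exact ⟨hC, (hdisj C hC).1 ⟨K, hK, hCK⟩⟩
  · rintro ⟨hC, hCs⟩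
    obtain ⟨K, hK, hCK⟩ := (hdisj C hC).2 hCs
    exact ⟨K, hC, hK, hCK⟩
end

section
/- Let x_1, …, x_k be nonnegative integers each having at most 3 ones in their binary representation, corresponding to pairwise disjoint 3-element subsets S_1, …, S_k of {0,…,m−1} (i.e., x_ℓ = Σ_{j ∈ S_ℓ} 2^j). Then x_1 + ⋯ + x_k = 2^m − 1 if and only if S_1, …, S_k partition {0,…,m−1}; more generally, for 3-element subsets S_1,…,S_d of {0,…,m−1} with m = 3d, Σ_ℓ Σ_{j∈S_ℓ} 2^j = 2^m − 1 if and only if the S_ℓ are pairwise disjoint and cover {0,…,m−1}. -/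
/-!
Let `c j` count the sets `S ℓ` containing `j`. Then `∑ ℓ, ∑ j ∈ S ℓ, 2 ^ j = ∑ j, c j * 2 ^ j`
and `∑ j, c j = 3 * d =: m`, so `e j := c j - 1 ≥ -1` satisfies `∑ j, e j * 2 ^ j = 0 = ∑ j, e j`
exactly when the sum is `2 ^ m - 1 = ∑ j < m, 2 ^ j`. Splitting off the lowest digit,
`∑ e j * 2 ^ j = e 0 + 2 * W` with `W ≤ 0` (as `e 0 ≥ -1`), and doubling a nonpositive tail only
decreases it; so `∑ e j * 2 ^ j ≤ ∑ e j` whenever the left side is `≤ 0`, and in the case of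
equality with both sides zero every `e j` vanishes. Thus the sum is `2 ^ m - 1` iff every point
is covered exactly once, i.e. the `S ℓ` form an exact cover.
-/

open Finset

section CoverCount

variable {ι α : Type*} [Fintype ι] [DecidableEq α]

def coverCount (S : ι → Finset α) (a : α) : ℕ := #{i | a ∈ S i}

theorem sum_sum_eq_sum_coverCount_nsmul {M : Type*} [AddCommMonoid M] {S : ι → Finset α}
    {s : Finset α} (hS : ∀ i, S i ⊆ s) (f : α → M) :
    ∑ i, ∑ a ∈ S i, f a = ∑ a ∈ s, coverCount S a • f a := by
  rw [sum_comm' (t' := s) (s' := fun a => {i | a ∈ S i})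
    (fun i a => by simpa using fun ha => hS i ha)]
  simp only [sum_const, coverCount]

theorem coverCount_eq_one_iff {S : ι → Finset α} {a : α} :
    coverCount S a = 1 ↔ ∃! i, a ∈ S i := by
  simp [coverCount, card_eq_one_iff_existsUnique]

theorem forall_coverCount_eq_one_iff {S : ι → Finset α} {s : Finset α} (hS : ∀ i, S i ⊆ s) :
    (∀ a ∈ s, coverCount S a = 1) ↔
      (∀ i j, i ≠ j → Disjoint (S i) (S j)) ∧ ∀ a ∈ s, ∃ i, a ∈ S i := by
  simp only [coverCount_eq_one_iff]
  constructor
  · intro h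
    refine ⟨fun i j hij => disjoint_left.mpr fun a hai haj => hij ?_,
      fun a ha => (h a ha).exists⟩
    exact (h a (hS i hai)).unique hai haj
  · rintro ⟨hdisj, hcover⟩ a ha
    obtain ⟨i, hai⟩ := hcover a ha
    refine ⟨i, hai, fun j haj => ?_⟩
    by_contra hji
    exact disjoint_left.mp (hdisj j i hji) haj hai

end CoverCount

theorem sum_range_succ_mul_pow {R : Type*} [CommSemiring R] (e : ℕ → R) (x : R) (m : ℕ) :
    ∑ j ∈ range (m + 1), e j * x ^ j = e 0 + x * ∑ j ∈ range m, e (j + 1) * x ^ j := by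
  rw [sum_range_succ', mul_sum, add_comm]
  simp only [pow_succ, pow_zero, mul_one]
  congr 1
  exact sum_congr rfl fun j _ => by ring

theorem sum_mul_two_pow_le_sum {m : ℕ} {e : ℕ → ℤ} (he : ∀ j < m, -1 ≤ e j)
    (h : ∑ j ∈ range m, e j * 2 ^ j ≤ 0) :
    ∑ j ∈ range m, e j * 2 ^ j ≤ ∑ j ∈ range m, e j := by
  induction m generalizing e with
  | zero => simp
  | succ m ih =>
    rw [sum_range_succ_mul_pow] at h ⊢
    rw [sum_range_succ']
    have he0 := he 0 m.succ_pos
    have htail := ih (e := fun j => e (j + 1)) (fun j hj => he (j + 1) (by omega)) (by omega)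
    omega

theorem eq_zero_of_sum_mul_two_pow_eq_zero {m : ℕ} {e : ℕ → ℤ} (he : ∀ j < m, -1 ≤ e j)
    (h : ∑ j ∈ range m, e j * 2 ^ j = 0) (h' : ∑ j ∈ range m, e j = 0) :
    ∀ j < m, e j = 0 := by
  induction m generalizing e with
  | zero => simp
  | succ m ih =>
    rw [sum_range_succ_mul_pow] at h
    rw [sum_range_succ'] at h'
    have he0 := he 0 m.succ_pos
    have he' : ∀ j < m, -1 ≤ e (j + 1) := fun j hj => he (j + 1) (by omega)
    have htail := sum_mul_two_pow_le_sum (e := fun j => e (j + 1)) he' (by omega)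
    have htail_zero := ih he' (by omega) (by omega)
    rintro (_ | j) hj
    · omega
    · exact htail_zero j (by omega)

theorem sum_mul_two_pow_eq_two_pow_sub_one_iff {m : ℕ} {c : ℕ → ℕ}
    (hc : ∑ j ∈ range m, c j = m) :
    ∑ j ∈ range m, c j * 2 ^ j = 2 ^ m - 1 ↔ ∀ j < m, c j = 1 := by
  have hgeom : ∑ j ∈ range m, 2 ^ j = 2 ^ m - 1 := by simpa using Nat.geomSum_eq le_rfl m
  rw [← hgeom]
  constructor
  · intro h j hj
    have hsum : ∑ j ∈ range m, ((c j : ℤ) - 1) * 2 ^ j = 0 := by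
      simp only [sub_mul, one_mul, sum_sub_distrib, sub_eq_zero]
      exact_mod_cast h
    have hcount : ∑ j ∈ range m, ((c j : ℤ) - 1) = 0 := by
      simp only [sum_sub_distrib]
      simp [← Nat.cast_sum, hc]
    have := eq_zero_of_sum_mul_two_pow_eq_zero (fun j _ => by omega) hsum hcount j hj
    omega
  · intro h
    exact sum_congr rfl fun j hj => by rw [h j (mem_range.mp hj), one_mul]

theorem sum_three_element_powers_eq_iff_exact_cover {d : ℕ}
    (S : Fin d → Finset ℕ) (hsub : ∀ ℓ, S ℓ ⊆ Finset.range (3 * d))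
    (hcard : ∀ ℓ, (S ℓ).card = 3) :
    (∑ ℓ : Fin d, ∑ j ∈ S ℓ, 2 ^ j) = 2 ^ (3 * d) - 1 ↔
      ((∀ i j : Fin d, i ≠ j → Disjoint (S i) (S j)) ∧
        ∀ x < 3 * d, ∃ ℓ, x ∈ S ℓ) := by
  have hcount : ∑ j ∈ range (3 * d), coverCount S j = 3 * d := by
    have := sum_sum_eq_sum_coverCount_nsmul hsub fun _ => 1
    simp only [← card_eq_sum_ones, hcard, smul_eq_mul, mul_one] at this
    simpa [mul_comm] using this.symm
  rw [sum_sum_eq_sum_coverCount_nsmul hsub]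
  simp only [smul_eq_mul]
  rw [sum_mul_two_pow_eq_two_pow_sub_one_iff hcount]
  simpa using forall_coverCount_eq_one_iff hsub
end

section
/- Let V be a finite set with |V| = 3d and let ℰ be a family of 3-element subsets of V. Fix a bijection of V with {0,…,3d−1} and assign to each E ∈ ℰ the integer a_E = Σ_{j∈E} 2^j, and let b = 2^{3d} − 1. Then there exist d pairwise disjoint members of ℰ covering V if and only if there exist d distinct members E_1,…,E_d of ℰ with a_{E_1} + ⋯ + a_{E_d} = b. -/
/-!
The sum `∑ E ∈ F, a_E` is `∑ 2 ^ x` over the multiset of exponents `f v` with `v ∈ E ∈ F`, which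
has `3 * #F` elements. For an exact cover these exponents are `0, …, 3d - 1`, giving `2 ^ (3d) - 1`.
Conversely, a sum of `k` powers of two has binary digit sum at most `k`, and at most `k - 1` if an
exponent repeats (merge `2 ^ x + 2 ^ x` into `2 ^ (x + 1)`). As `2 ^ (3d) - 1` has digit sum `3d`,
the exponents are distinct, so the members of `F` are pairwise disjoint, and `3d` distinct
elements exhaust `V`.
-/

open Finset

namespace Nat

/-- By Legendre's formula `v₂(n!) = n - s₂(n)`, this is `a! * b! ∣ (a + b)!`. -/
theorem digits_two_sum_add_le (a b : ℕ) :
    (digits 2 (a + b)).sum ≤ (digits 2 a).sum + (digits 2 b).sum := by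
  have hdvd : padicValNat 2 (a ! * b !) ≤ padicValNat 2 (a + b)! :=
    padicValNat_dvd_iff_le (factorial_ne_zero _) |>.mp
      ((pow_padicValNat_dvd).trans (factorial_mul_factorial_dvd_factorial_add a b))
  rw [padicValNat.mul (factorial_ne_zero _) (factorial_ne_zero _)] at hdvd
  have := sub_one_mul_padicValNat_factorial (p := 2) a
  have := sub_one_mul_padicValNat_factorial (p := 2) b
  have := sub_one_mul_padicValNat_factorial (p := 2) (a + b)
  have := digit_sum_le 2 a
  have := digit_sum_le 2 b
  have := digit_sum_le 2 (a + b)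
  omega

theorem digits_two_sum_two_pow (k : ℕ) : (digits 2 (2 ^ k)).sum = 1 := by
  simpa using congrArg List.sum (digits_base_pow_mul (b := 2) (k := k) (m := 1) one_lt_two one_pos)

theorem digits_two_sum_two_pow_sub_one (n : ℕ) : (digits 2 (2 ^ n - 1)).sum = n := by
  induction n with
  | zero => simp
  | succ n ih =>
    have h : 2 ^ (n + 1) - 1 = 1 + 2 * (2 ^ n - 1) := by
      have := Nat.one_le_two_pow (n := n); rw [pow_succ]; omega
    rw [h, digits_add 2 one_lt_two 1 _ one_lt_two (Or.inl one_ne_zero), List.sum_cons, ih, add_comm]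

theorem digits_two_sum_sum_map_two_pow_le (s : Multiset ℕ) :
    (digits 2 (s.map (2 ^ ·)).sum).sum ≤ Multiset.card s := by
  have := Multiset.le_sum_of_subadditive (fun m => (digits 2 m).sum) (by simp)
    digits_two_sum_add_le (s.map (2 ^ ·))
  simpa only [Multiset.map_map, Function.comp_def, digits_two_sum_two_pow, Multiset.map_const',
    Multiset.sum_replicate, smul_eq_mul, mul_one] using this

end Nat

theorem Multiset.nodup_of_sum_map_two_pow_eq {s : Multiset ℕ} {n : ℕ} (hcard : card s ≤ n)
    (hsum : (s.map (2 ^ ·)).sum = 2 ^ n - 1) : s.Nodup := by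
  refine Multiset.nodup_iff_ne_cons_cons.mpr fun x t hst => ?_
  subst hst
  have hmerge : ((x ::ₘ x ::ₘ t).map (2 ^ ·)).sum = (((x + 1) ::ₘ t).map (2 ^ ·)).sum := by
    simp only [Multiset.map_cons, Multiset.sum_cons, pow_succ]
    ring
  have := Nat.digits_two_sum_sum_map_two_pow_le ((x + 1) ::ₘ t)
  rw [← hmerge, hsum, Nat.digits_two_sum_two_pow_sub_one] at this
  simp only [Multiset.card_cons] at hcard this
  omega

section

variable {V : Type*}

theorem Finset.sum_sum_eq_sum_univ_of_pairwiseDisjoint [Fintype V] [DecidableEq V]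
    {M : Type*} [AddCommMonoid M] {F : Finset (Finset V)}
    (hdisj : (F : Set (Finset V)).PairwiseDisjoint id) (hcov : ∀ v, ∃ E ∈ F, v ∈ E) (g : V → M) :
    ∑ E ∈ F, ∑ v ∈ E, g v = ∑ v, g v := by
  have hunion : F.biUnion id = univ := eq_univ_of_forall fun v => mem_biUnion.mpr (hcov v)
  rw [← hunion, sum_biUnion hdisj]
  rfl

theorem Finset.pairwiseDisjoint_of_sum_sum_two_pow_eq {e : V → ℕ}
    {F : Finset (Finset V)} {n : ℕ} (hcard : ∑ E ∈ F, #E ≤ n)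
    (hsum : ∑ E ∈ F, ∑ v ∈ E, 2 ^ e v = 2 ^ n - 1) :
    (F : Set (Finset V)).PairwiseDisjoint id := by
  have hnodup : ((F.val.bind Finset.val).map e).Nodup := by
    refine Multiset.nodup_of_sum_map_two_pow_eq (n := n) ?_ ?_
    · rwa [Multiset.card_map, Multiset.card_bind]
    · rwa [Multiset.map_map, Multiset.map_bind, Multiset.sum_bind]
  have hpair := (Multiset.nodup_bind.mp (hnodup.of_map e)).2.forall
  exact fun E₁ h₁ E₂ h₂ hne => disjoint_val.mp (hpair h₁ h₂ hne)

theorem Finset.forall_exists_mem_of_pairwiseDisjoint [Fintype V] [DecidableEq V]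
    {F : Finset (Finset V)} (hdisj : (F : Set (Finset V)).PairwiseDisjoint id)
    (hcard : Fintype.card V ≤ ∑ E ∈ F, #E) : ∀ v, ∃ E ∈ F, v ∈ E := by
  have hunion : F.biUnion id = univ := eq_univ_of_card _ <|
    le_antisymm (card_le_univ _) (by rwa [card_biUnion hdisj])
  exact fun v => mem_biUnion.mp (hunion ▸ mem_univ v)

theorem Fintype.sum_two_pow_equiv_fin [Fintype V] {n : ℕ} (f : V ≃ Fin n) :
    ∑ v, 2 ^ (f v : ℕ) = 2 ^ n - 1 := by
  rw [f.sum_comp (fun i : Fin n => 2 ^ (i : ℕ)), Fin.sum_univ_eq_sum_range (2 ^ ·),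
    Nat.geomSum_eq le_rfl, Nat.div_one]

end

theorem exact_cover_iff_subset_sum {V : Type*} [Fintype V] [DecidableEq V] {d : ℕ}
    (hV : Fintype.card V = 3 * d) (f : V ≃ Fin (3 * d))
    (ℰ : Finset (Finset V)) (hcard : ∀ E ∈ ℰ, E.card = 3) :
    (∃ F ⊆ ℰ, F.card = d ∧
        (∀ E₁ ∈ F, ∀ E₂ ∈ F, E₁ ≠ E₂ → Disjoint E₁ E₂) ∧
        ∀ v : V, ∃ E ∈ F, v ∈ E) ↔
      (∃ F ⊆ ℰ, F.card = d ∧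
        ∑ E ∈ F, (∑ v ∈ E, 2 ^ ((f v : ℕ))) = 2 ^ (3 * d) - 1) := by
  have hsize : ∀ F ⊆ ℰ, ∑ E ∈ F, #E = 3 * #F := fun F hF => by
    rw [sum_congr rfl fun E hE => hcard E (hF hE), sum_const, smul_eq_mul, mul_comm]
  constructor
  · rintro ⟨F, hFℰ, hFd, hdisj, hcov⟩
    refine ⟨F, hFℰ, hFd, ?_⟩
    rw [sum_sum_eq_sum_univ_of_pairwiseDisjoint (fun E₁ h₁ E₂ h₂ => hdisj E₁ h₁ E₂ h₂) hcov,
      Fintype.sum_two_pow_equiv_fin]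
  · rintro ⟨F, hFℰ, hFd, hsum⟩
    have hdisj := pairwiseDisjoint_of_sum_sum_two_pow_eq
      (by rw [hsize F hFℰ, hFd]) hsum
    exact ⟨F, hFℰ, hFd, fun E₁ h₁ E₂ h₂ => hdisj h₁ h₂,
      forall_exists_mem_of_pairwiseDisjoint hdisj (by rw [hV, hsize F hFℰ, hFd])⟩
end
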